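/- arXiv:1110.0708 — 3 statements merged into one kernel-verified Lean document; each statement's English description precedes it below -/
import Mathlib

section
/- Let q be a prime. For every real s > 1, (Σ_{n ∈ S_{φ;q}} n^{−s}) · (Σ_{n ∈ S'_{q;1}} n^{−s}) = ζ(s) · (1 − q^{−2s}), where ζ is the Riemann zeta function. -/
/-!
For a prime `q`, `q ∣ φ(n)` exactly when `q² ∣ n` or `n` has a prime factor `p ≡ 1 (mod q)`.
Hence every `n` with `q² ∤ n` splits uniquely as `a * b`, where `b` is its part at the primes
`p ≡ 1 (mod q)` and lies in `S'_{q;1}`, while `a` lies in `S_{φ;q}`; conversely no such product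
is divisible by `q²`. Multiplying the two Dirichlet series thus gives the Dirichlet series of
`{n : q² ∤ n}`, which is `ζ(s) - (q²)^{-s} ζ(s)`.
-/

open Filter Real
open scoped Classical

/-- The Dirichlet series `L_S(s) = ∑_{n ∈ S} n^{-s}` of a set `S` of positive
integers (as a function of a real variable `s`). -/
noncomputable def LSeries' (S : Set ℕ) (s : ℝ) : ℝ :=
  ∑' n : ℕ, if n ∈ S then (n : ℝ) ^ (-s) else 0

/-- `γS` is the Euler–Kronecker constant of `S` (with density `δ`), i.e.
`L_S'(s)/L_S(s) + δ/(s-1) → γS` as `s → 1⁺`. -/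
def IsEulerKronecker (S : Set ℕ) (δ γS : ℝ) : Prop :=
  Tendsto (fun s : ℝ => deriv (LSeries' S) s / LSeries' S s + δ / (s - 1))
    (nhdsWithin 1 (Set.Ioi 1)) (nhds γS)

/-- `S_{φ;q}`: the set of positive integers `n` with `q ∤ φ(n)`. -/
def SPhi (q : ℕ) : Set ℕ := {n : ℕ | 0 < n ∧ ¬ q ∣ Nat.totient n}

/-- `S'_{q;1}`: the set of positive integers all of whose prime factors are
`≡ 1 (mod q)`. -/
def SOne (q : ℕ) : Set ℕ :=
  {n : ℕ | 0 < n ∧ ∀ p : ℕ, p.Prime → p ∣ n → p % q = 1}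

lemma Nat.mod_eq_one_iff_dvd_sub_one {p q : ℕ} (hq : 1 < q) (hp : 1 ≤ p) :
    p % q = 1 ↔ q ∣ p - 1 := by
  rw [← Nat.modEq_iff_dvd' hp, Nat.ModEq, Nat.mod_eq_of_lt hq, eq_comm]

lemma Nat.primeFactors_prod_pow_factorization_filter (P : ℕ → Prop) [DecidablePred P] (n : ℕ) :
    ((n.factorization.filter P).prod (· ^ ·)).primeFactors = n.primeFactors.filter P := by
  rw [← Nat.support_factorization, Nat.prod_pow_factorization_eq_self, Finsupp.support_filter,
    Nat.support_factorization]
  intro p hp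
  rw [Finsupp.support_filter, Finset.mem_filter] at hp
  exact Nat.prime_of_mem_primeFactors hp.1

lemma Nat.exists_mul_eq_primeFactors_partition (P : ℕ → Prop) {n : ℕ} (hn : n ≠ 0) :
    ∃ a b, a * b = n ∧ (∀ p ∈ a.primeFactors, ¬ P p) ∧ ∀ p ∈ b.primeFactors, P p := by
  refine ⟨(n.factorization.filter fun p => ¬ P p).prod (· ^ ·),
    (n.factorization.filter P).prod (· ^ ·), ?_, fun p hp => ?_, fun p hp => ?_⟩
  · rw [mul_comm, Finsupp.prod_filter_mul_prod_filter_not, Nat.prod_factorization_pow_eq_self hn]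
  · rw [Nat.primeFactors_prod_pow_factorization_filter] at hp
    exact (Finset.mem_filter.mp hp).2
  · rw [Nat.primeFactors_prod_pow_factorization_filter] at hp
    exact (Finset.mem_filter.mp hp).2

lemma Nat.Prime.dvd_totient_iff {q n : ℕ} (hq : q.Prime) (hn : n ≠ 0) :
    q ∣ n.totient ↔ q ^ 2 ∣ n ∨ ∃ p ∈ n.primeFactors, p % q = 1 := by
  constructor
  · intro h
    rw [Nat.totient_eq_prod_factorization hn] at h
    obtain ⟨p, hp, hpq⟩ := (hq.prime.dvd_finsetProd_iff _).mp h
    have hpp : p.Prime := Nat.prime_of_mem_primeFactors hp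
    rcases hq.prime.dvd_mul.mp hpq with hqp | hqp
    · have hk : n.factorization p - 1 ≠ 0 := by
        rintro hk
        rw [hk, pow_zero, Nat.dvd_one] at hqp
        exact hq.one_lt.ne' hqp
      obtain rfl : q = p := (Nat.prime_dvd_prime_iff_eq hq hpp).mp (hq.dvd_of_dvd_pow hqp)
      exact .inl ((pow_dvd_pow q (by omega)).trans (Nat.ordProj_dvd n q))
    · exact .inr ⟨p, hp, (Nat.mod_eq_one_iff_dvd_sub_one hq.one_lt hpp.one_le).mpr hqp⟩
  · rintro (hq2 | ⟨p, hp, hpq⟩)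
    · refine dvd_trans ?_ (Nat.totient_dvd_of_dvd hq2)
      rw [Nat.totient_prime_pow hq two_pos]
      exact dvd_mul_of_dvd_left (dvd_pow_self q one_ne_zero) _
    · have hpp : p.Prime := Nat.prime_of_mem_primeFactors hp
      refine dvd_trans ?_ (Nat.totient_dvd_of_dvd (Nat.dvd_of_mem_primeFactors hp))
      rw [Nat.totient_prime hpp]
      exact (Nat.mod_eq_one_iff_dvd_sub_one hq.one_lt hpp.one_le).mp hpq

lemma mem_SPhi_iff {q n : ℕ} (hq : q.Prime) :
    n ∈ SPhi q ↔ ¬ q ^ 2 ∣ n ∧ ∀ p ∈ n.primeFactors, p % q ≠ 1 := by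
  constructor
  · rintro ⟨hn, h⟩
    rw [hq.dvd_totient_iff hn.ne'] at h
    push Not at h
    exact h
  · rintro ⟨hq2, h⟩
    have hn : n ≠ 0 := by rintro rfl; exact hq2 (dvd_zero _)
    refine ⟨Nat.pos_of_ne_zero hn, ?_⟩
    rw [hq.dvd_totient_iff hn]
    push Not
    exact ⟨hq2, h⟩

lemma mem_SOne_iff {q n : ℕ} : n ∈ SOne q ↔ n ≠ 0 ∧ ∀ p ∈ n.primeFactors, p % q = 1 := by
  simp only [SOne, Set.mem_ofPred_eq, Nat.mem_primeFactors, pos_iff_ne_zero]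
  aesop

lemma coprime_of_mem_SPhi_of_mem_SOne {q a b : ℕ} (hq : q.Prime) (ha : a ∈ SPhi q)
    (hb : b ∈ SOne q) : a.Coprime b :=
  Nat.coprime_of_dvd fun p hp hpa hpb =>
    ((mem_SPhi_iff hq).mp ha).2 p (Nat.mem_primeFactors.mpr ⟨hp, hpa, ha.1.ne'⟩) (hb.2 p hp hpb)

theorem bijOn_mul_SPhi_SOne {q : ℕ} (hq : q.Prime) :
    Set.BijOn (fun x : ℕ × ℕ => x.1 * x.2) (SPhi q ×ˢ SOne q) {n | ¬ q ^ 2 ∣ n} := by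
  refine ⟨?mapsTo, ?injOn, ?surjOn⟩
  case mapsTo =>
    rintro ⟨a, b⟩ ⟨ha, hb⟩ hab
    have hqb : ¬ q ∣ b := fun hqb => by simpa using hb.2 q hq hqb
    have hcop : Nat.Coprime (q ^ 2) b := (hq.coprime_iff_not_dvd.mpr hqb).pow_left 2
    exact ((mem_SPhi_iff hq).mp ha).1 (hcop.dvd_of_dvd_mul_right hab)
  case injOn =>
    rintro ⟨a₁, b₁⟩ ⟨ha₁, hb₁⟩ ⟨a₂, b₂⟩ ⟨ha₂, hb₂⟩ (h : a₁ * b₁ = a₂ * b₂)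
    obtain rfl : a₁ = a₂ := Nat.dvd_antisymm
      ((coprime_of_mem_SPhi_of_mem_SOne hq ha₁ hb₂).dvd_of_dvd_mul_right ⟨b₁, h.symm⟩)
      ((coprime_of_mem_SPhi_of_mem_SOne hq ha₂ hb₁).dvd_of_dvd_mul_right ⟨b₂, h⟩)
    rw [Nat.eq_of_mul_eq_mul_left ha₁.1 h]
  case surjOn =>
    intro n (hn : ¬ q ^ 2 ∣ n)
    have hn₀ : n ≠ 0 := by rintro rfl; exact hn (dvd_zero _)
    obtain ⟨a, b, hab, ha, hb⟩ := Nat.exists_mul_eq_primeFactors_partition (· % q = 1) hn₀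
    refine ⟨(a, b), ⟨(mem_SPhi_iff hq).mpr ⟨fun h => hn (h.trans ⟨b, hab.symm⟩), ha⟩,
      mem_SOne_iff.mpr ⟨right_ne_zero_of_mul (hab ▸ hn₀), hb⟩⟩, hab⟩

namespace LSeries'

variable {s : ℝ}

lemma eq_tsum_subtype (S : Set ℕ) (s : ℝ) : LSeries' S s = ∑' n : S, (n : ℝ) ^ (-s) := by
  rw [tsum_subtype S fun n : ℕ => (n : ℝ) ^ (-s)]
  simp only [LSeries', Set.indicator_apply]

lemma univ_eq_tsum (s : ℝ) : LSeries' Set.univ s = ∑' n : ℕ, (n : ℝ) ^ (-s) := by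
  simp [LSeries']

lemma summable_norm_term (S : Set ℕ) (hs : 1 < s) :
    Summable fun n : ℕ => ‖if n ∈ S then (n : ℝ) ^ (-s) else 0‖ := by
  refine (Real.summable_nat_rpow.mpr (by linarith : -s < -1)).of_nonneg_of_le
    (fun _ => norm_nonneg _) fun n => ?_
  split_ifs
  · rw [Real.norm_of_nonneg (by positivity)]
  · simpa using Real.rpow_nonneg n.cast_nonneg (-s)

lemma mul_eq_of_bijOn {A B C : Set ℕ} (hs : 1 < s)
    (h : Set.BijOn (fun x : ℕ × ℕ => x.1 * x.2) (A ×ˢ B) C) :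
    LSeries' A s * LSeries' B s = LSeries' C s := by
  have hprod : ∀ x : ℕ × ℕ, ((if x.1 ∈ A then (x.1 : ℝ) ^ (-s) else 0) *
      if x.2 ∈ B then (x.2 : ℝ) ^ (-s) else 0) =
      (A ×ˢ B).indicator (fun x => ((x.1 * x.2 : ℕ) : ℝ) ^ (-s)) x := by
    intro x
    by_cases hA : x.1 ∈ A <;> by_cases hB : x.2 ∈ B <;>
      simp [hA, hB, Real.mul_rpow]
  rw [LSeries', LSeries', tsum_mul_tsum_of_summable_norm (summable_norm_term A hs)
    (summable_norm_term B hs), eq_tsum_subtype]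
  simp_rw [hprod, ← tsum_subtype]
  exact (h.equiv _).tsum_eq (fun n : C => (n : ℝ) ^ (-s))

lemma compl_eq_sub (S : Set ℕ) (hs : 1 < s) :
    LSeries' Sᶜ s = LSeries' Set.univ s - LSeries' S s := by
  rw [LSeries', LSeries', LSeries', ← (summable_norm_term _ hs).of_norm.tsum_sub
    (summable_norm_term S hs).of_norm]
  congr 1 with n
  by_cases hn : n ∈ S <;> simp [hn]

lemma setOf_dvd_eq {d : ℕ} (hd : d ≠ 0) (hs : 1 < s) :
    LSeries' {n | d ∣ n} s = (d : ℝ) ^ (-s) * LSeries' Set.univ s := by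
  have hbij : Set.BijOn (fun x : ℕ × ℕ => x.1 * x.2) ({d} ×ˢ Set.univ) {n | d ∣ n} := by
    refine ⟨fun x hx => ?_, fun x hx y hy hxy => ?_, fun n ⟨m, hm⟩ => ⟨(d, m), by simp, hm.symm⟩⟩
    · simp_all
    · simp_all [Prod.ext_iff]
  rw [← mul_eq_of_bijOn hs hbij]
  simp [LSeries']

end LSeries'

/-- For a prime `q` and real `s > 1`,
`L_{S_{φ;q}}(s) · L_{S'_{q;1}}(s) = ζ(s) (1 - q^{-2s})`. -/
theorem LSeries_SPhi_mul_LSeries_SOne (q : ℕ) (hq : q.Prime) (s : ℝ) (hs : 1 < s) :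
    LSeries' (SPhi q) s * LSeries' (SOne q) s =
      (∑' n : ℕ, (n : ℝ) ^ (-s)) * (1 - (q : ℝ) ^ (-(2 * s))) := by
  have hq2 : ((q ^ 2 : ℕ) : ℝ) ^ (-s) = (q : ℝ) ^ (-(2 * s)) := by
    rw [Nat.cast_pow, ← Real.rpow_natCast, ← Real.rpow_mul q.cast_nonneg]
    ring_nf
  calc LSeries' (SPhi q) s * LSeries' (SOne q) s = LSeries' {n | q ^ 2 ∣ n}ᶜ s :=
        LSeries'.mul_eq_of_bijOn hs (bijOn_mul_SPhi_SOne hq)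
    _ = LSeries' Set.univ s - ((q ^ 2 : ℕ) : ℝ) ^ (-s) * LSeries' Set.univ s := by
        rw [LSeries'.compl_eq_sub _ hs, LSeries'.setOf_dvd_eq (pow_ne_zero 2 hq.ne_zero) hs]
    _ = _ := by rw [hq2, LSeries'.univ_eq_tsum]; ring
end

section
/- Let M(1,√2) be the common limit of the sequences a_0 = 1, b_0 = √2, a_{n+1} = (a_n + b_n)/2, b_{n+1} = √(a_n · b_n). Then 1/M(1,√2) = (2/π) · ∫₀¹ dx/√(1 − x⁴). -/
/-!
Put `I(a, b) = ∫₀^∞ dx / √((x² + a²)(x² + b²))`. Newman's substitution `t = (x - ab/x)/2` maps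
`(0, ∞)` bijectively onto `ℝ` and turns `I((a + b)/2, √(ab))` into `I(a, b)`, so `I` is constant
along the AGM iteration. Since `π / (2 max a b) ≤ I(a, b) ≤ π / (2 min a b)`, letting both
means tend to `M` gives `I(1, √2) = π / (2M)`. Finally `u = x / √(x² + 2)` transforms
`∫₀¹ du / √(1 - u⁴)` into `I(1, √2)`.
-/

open Filter Real

/-- Lagrange's AGM iteration started from `(1, √2)`:
`a₀ = 1`, `b₀ = √2`, `a_{n+1} = (a_n + b_n)/2`, `b_{n+1} = √(a_n b_n)`. -/
noncomputable def agm : ℕ → ℝ × ℝ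
  | 0 => (1, Real.sqrt 2)
  | n + 1 => (((agm n).1 + (agm n).2) / 2, Real.sqrt ((agm n).1 * (agm n).2))

open Set MeasureTheory

section

variable {a b k : ℝ}

lemma inv_sq_add_sq_eq {c : ℝ} (hc : c ≠ 0) (x : ℝ) :
    (x ^ 2 + c ^ 2)⁻¹ = (c ^ 2)⁻¹ * (1 + (x / c) ^ 2)⁻¹ := by
  field_simp
  ring

lemma integrable_inv_sq_add_sq {c : ℝ} (hc : c ≠ 0) :
    Integrable fun x : ℝ => (x ^ 2 + c ^ 2)⁻¹ := by
  simpa only [inv_sq_add_sq_eq hc] using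
    (integrable_inv_one_add_sq.comp_div hc).const_mul (c ^ 2)⁻¹

lemma integral_Ioi_inv_sq_add_sq {c : ℝ} (hc : 0 < c) :
    ∫ x in Ioi 0, (x ^ 2 + c ^ 2)⁻¹ = π / (2 * c) := calc
  _ = (c ^ 2)⁻¹ * ∫ x in Ioi 0, (1 + (c⁻¹ * x) ^ 2)⁻¹ := by
    simp_rw [inv_sq_add_sq_eq hc.ne', integral_const_mul, div_eq_inv_mul _ c]
  _ = (c ^ 2)⁻¹ * (c * (π / 2)) := by
    rw [integral_comp_mul_left_Ioi (fun x => (1 + x ^ 2)⁻¹) 0 (inv_pos.2 hc), mul_zero,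
      integral_Ioi_inv_one_add_sq, arctan_zero, sub_zero, inv_inv, smul_eq_mul]
  _ = π / (2 * c) := by field_simp

lemma inv_sqrt_mul_le_inv {u v w : ℝ} (hu : 0 < u) (hv : u ≤ v) (hw : u ≤ w) :
    (√(v * w))⁻¹ ≤ u⁻¹ := by
  refine inv_anti₀ hu ?_
  calc u = √(u * u) := (sqrt_mul_self hu.le).symm
    _ ≤ √(v * w) := sqrt_le_sqrt (mul_le_mul hv hw hu.le (hu.trans_le hv).le)

lemma inv_le_inv_sqrt_mul {u v w : ℝ} (hv : 0 < v) (hw : 0 < w) (hvu : v ≤ u) (hwu : w ≤ u) :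
    u⁻¹ ≤ (√(v * w))⁻¹ := by
  refine inv_anti₀ (sqrt_pos.2 (mul_pos hv hw)) ?_
  calc √(v * w) ≤ √(u * u) := sqrt_le_sqrt (mul_le_mul hvu hwu hw.le (hv.trans_le hvu).le)
    _ = u := sqrt_mul_self (hv.trans_le hvu).le

noncomputable def agmIntegrand (a b x : ℝ) : ℝ := (√((x ^ 2 + a ^ 2) * (x ^ 2 + b ^ 2)))⁻¹

noncomputable def agmIntegral (a b : ℝ) : ℝ := ∫ x in Ioi 0, agmIntegrand a b x

lemma agmIntegrand_le (ha : 0 < a) (hb : 0 < b) (x : ℝ) :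
    agmIntegrand a b x ≤ (x ^ 2 + min a b ^ 2)⁻¹ := by
  have hm : 0 < min a b := lt_min ha hb
  refine inv_sqrt_mul_le_inv (by positivity) ?_ ?_ <;> gcongr
  exacts [min_le_left a b, min_le_right a b]

lemma inv_le_agmIntegrand (ha : 0 < a) (hb : 0 < b) (x : ℝ) :
    (x ^ 2 + max a b ^ 2)⁻¹ ≤ agmIntegrand a b x := by
  refine inv_le_inv_sqrt_mul (by positivity) (by positivity) ?_ ?_ <;> gcongr
  exacts [le_max_left a b, le_max_right a b]

lemma continuous_agmIntegrand (ha : 0 < a) (hb : 0 < b) : Continuous (agmIntegrand a b) :=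
  Continuous.inv₀ (by fun_prop) fun x => (sqrt_pos.2 (by positivity)).ne'

lemma integrable_agmIntegrand (ha : 0 < a) (hb : 0 < b) : Integrable (agmIntegrand a b) := by
  refine (integrable_inv_sq_add_sq (lt_min ha hb).ne').mono'
    (continuous_agmIntegrand ha hb).aestronglyMeasurable (Eventually.of_forall fun x => ?_)
  rw [agmIntegrand, norm_inv, norm_of_nonneg (sqrt_nonneg _)]
  exact agmIntegrand_le ha hb x

lemma agmIntegral_le (ha : 0 < a) (hb : 0 < b) : agmIntegral a b ≤ π / (2 * min a b) := by
  rw [← integral_Ioi_inv_sq_add_sq (lt_min ha hb)]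
  exact setIntegral_mono (integrable_agmIntegrand ha hb).integrableOn
    (integrable_inv_sq_add_sq (lt_min ha hb).ne').integrableOn (agmIntegrand_le ha hb)

lemma le_agmIntegral (ha : 0 < a) (hb : 0 < b) : π / (2 * max a b) ≤ agmIntegral a b := by
  rw [← integral_Ioi_inv_sq_add_sq (lt_max_of_lt_left ha)]
  exact setIntegral_mono (integrable_inv_sq_add_sq (lt_max_of_lt_left ha).ne').integrableOn
    (integrable_agmIntegrand ha hb).integrableOn (inv_le_agmIntegrand ha hb)

noncomputable def newmanSubst (k x : ℝ) : ℝ := (x - k / x) / 2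

lemma hasDerivAt_newmanSubst {x : ℝ} (hx : x ≠ 0) :
    HasDerivAt (newmanSubst k) ((1 + k / x ^ 2) / 2) x := by
  have h : newmanSubst k = fun y => (id y - k * y⁻¹) / 2 := by
    funext y
    simp only [newmanSubst, id, div_eq_mul_inv]
  rw [h]
  exact (((hasDerivAt_id x).sub ((hasDerivAt_inv hx).const_mul k)).div_const 2).congr_deriv
    (by ring)

lemma strictMonoOn_newmanSubst (hk : 0 ≤ k) : StrictMonoOn (newmanSubst k) (Ioi 0) := by
  intro x hx y _ hxy
  have : k / y ≤ k / x := div_le_div_of_nonneg_left hk hx hxy.le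
  simp only [newmanSubst]
  linarith

lemma add_sqrt_sq_add_pos (hk : 0 < k) (t : ℝ) : 0 < t + √(t ^ 2 + k) := by
  have : |t| < √(t ^ 2 + k) := by
    rw [← sqrt_sq_eq_abs]
    exact sqrt_lt_sqrt (sq_nonneg t) (by linarith)
  linarith [neg_abs_le t]

lemma newmanSubst_add_sqrt (hk : 0 < k) (t : ℝ) : newmanSubst k (t + √(t ^ 2 + k)) = t := by
  have hs : √(t ^ 2 + k) ^ 2 = t ^ 2 + k := sq_sqrt (by positivity)
  have : k / (t + √(t ^ 2 + k)) = √(t ^ 2 + k) - t := by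
    rw [div_eq_iff (add_sqrt_sq_add_pos hk t).ne']
    nlinarith
  rw [newmanSubst, this]
  ring

lemma image_newmanSubst_Ioi (hk : 0 < k) : newmanSubst k '' Ioi 0 = univ :=
  eq_univ_of_forall fun t => ⟨_, add_sqrt_sq_add_pos hk t, newmanSubst_add_sqrt hk t⟩

lemma deriv_newmanSubst_mul_agmIntegrand (ha : 0 < a) (hb : 0 < b) {x : ℝ} (hx : 0 < x) :
    (1 + a * b / x ^ 2) / 2 * agmIntegrand ((a + b) / 2) √(a * b) (newmanSubst (a * b) x)
      = 2 * agmIntegrand a b x := by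
  have hab : 0 < a * b := mul_pos ha hb
  have h₁ : newmanSubst (a * b) x ^ 2 + ((a + b) / 2) ^ 2
      = (x ^ 2 + a ^ 2) * (x ^ 2 + b ^ 2) / (2 * x) ^ 2 := by
    rw [newmanSubst]; field_simp; ring
  have h₂ : newmanSubst (a * b) x ^ 2 + √(a * b) ^ 2 = ((x ^ 2 + a * b) / (2 * x)) ^ 2 := by
    rw [sq_sqrt hab.le, newmanSubst]; field_simp; ring
  have hP : 0 < √((x ^ 2 + a ^ 2) * (x ^ 2 + b ^ 2)) := sqrt_pos.2 (by positivity)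
  rw [agmIntegrand, agmIntegrand, h₁, h₂, sqrt_mul (by positivity), sqrt_div' _ (by positivity),
    sqrt_sq (by positivity), sqrt_sq (by positivity)]
  field_simp

theorem agmIntegral_mean_sqrt (ha : 0 < a) (hb : 0 < b) :
    agmIntegral ((a + b) / 2) √(a * b) = agmIntegral a b := by
  have hab : 0 < a * b := mul_pos ha hb
  have hderiv : ∀ x ∈ Ioi (0 : ℝ),
      HasDerivWithinAt (newmanSubst (a * b)) ((1 + a * b / x ^ 2) / 2) (Ioi 0) x :=
    fun x hx => (hasDerivAt_newmanSubst (ne_of_gt hx)).hasDerivWithinAt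
  suffices 2 * agmIntegral ((a + b) / 2) √(a * b) = 2 * agmIntegral a b by linarith
  calc 2 * agmIntegral ((a + b) / 2) √(a * b)
      = ∫ x, agmIntegrand ((a + b) / 2) √(a * b) |x| := integral_comp_abs.symm
    _ = ∫ x in newmanSubst (a * b) '' Ioi 0, agmIntegrand ((a + b) / 2) √(a * b) x := by
      simp only [agmIntegrand, sq_abs, image_newmanSubst_Ioi hab, setIntegral_univ]
    _ = ∫ x in Ioi 0, |(1 + a * b / x ^ 2) / 2| •
          agmIntegrand ((a + b) / 2) √(a * b) (newmanSubst (a * b) x) :=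
      integral_image_eq_integral_abs_deriv_smul measurableSet_Ioi hderiv
        (strictMonoOn_newmanSubst hab.le).injOn _
    _ = ∫ x in Ioi 0, 2 * agmIntegrand a b x := by
      refine setIntegral_congr_fun measurableSet_Ioi fun x hx => ?_
      rw [abs_of_pos (by positivity), smul_eq_mul, deriv_newmanSubst_mul_agmIntegrand ha hb hx]
    _ = 2 * agmIntegral a b := integral_const_mul _ _

noncomputable def lemniscateSubst (x : ℝ) : ℝ := x / √(x ^ 2 + 2)

lemma hasDerivAt_lemniscateSubst (x : ℝ) :
    HasDerivAt lemniscateSubst (2 / ((x ^ 2 + 2) * √(x ^ 2 + 2))) x := by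
  have hr : 0 < √(x ^ 2 + 2) := sqrt_pos.2 (by positivity)
  have hs : HasDerivAt (fun y => √(y ^ 2 + 2)) (x / √(x ^ 2 + 2)) x := by
    convert ((hasDerivAt_pow 2 x).add_const 2).sqrt (by positivity) using 1
    field_simp
    push_cast
    ring
  refine ((hasDerivAt_id' x).div hs hr.ne').congr_deriv ?_
  field_simp
  rw [sq_sqrt (by positivity)]
  ring

lemma strictMono_lemniscateSubst : StrictMono lemniscateSubst :=
  strictMono_of_hasDerivAt_pos hasDerivAt_lemniscateSubst fun x => by positivity

lemma image_lemniscateSubst_Ioi : lemniscateSubst '' Ioi 0 = Ioo 0 1 := by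
  ext u
  constructor
  · rintro ⟨x, hx, rfl⟩
    have hr : 0 < √(x ^ 2 + 2) := sqrt_pos.2 (by positivity)
    refine ⟨div_pos hx hr, (div_lt_one hr).2 ((lt_sqrt (le_of_lt hx)).2 (by linarith))⟩
  · rintro ⟨hu₀, hu₁⟩
    have hu : 0 < 1 - u ^ 2 := by nlinarith
    have hx : (u * √(2 / (1 - u ^ 2))) ^ 2 + 2 = 2 / (1 - u ^ 2) := by
      rw [mul_pow, sq_sqrt (by positivity)]
      field_simp
      ring
    refine ⟨u * √(2 / (1 - u ^ 2)), mul_pos hu₀ (sqrt_pos.2 (by positivity)), ?_⟩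
    rw [lemniscateSubst, hx]
    field_simp

lemma deriv_lemniscateSubst_mul (x : ℝ) :
    2 / ((x ^ 2 + 2) * √(x ^ 2 + 2)) * (1 / √(1 - lemniscateSubst x ^ 4))
      = agmIntegrand 1 √2 x := by
  have hr : √(x ^ 2 + 2) ^ 2 = x ^ 2 + 2 := sq_sqrt (by positivity)
  have h : 1 - lemniscateSubst x ^ 4 = (2 * √(x ^ 2 + 1) / (x ^ 2 + 2)) ^ 2 := by
    rw [lemniscateSubst, div_pow, show √(x ^ 2 + 2) ^ 4 = (√(x ^ 2 + 2) ^ 2) ^ 2 by ring, hr,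
      div_pow, mul_pow, sq_sqrt (by positivity)]
    field_simp
    ring
  rw [h, sqrt_sq (by positivity), agmIntegrand, one_pow, sq_sqrt zero_le_two,
    sqrt_mul (by positivity)]
  field_simp

theorem integral_lemniscate :
    ∫ x in (0 : ℝ)..1, 1 / √(1 - x ^ 4) = agmIntegral 1 √2 := calc
  _ = ∫ x in lemniscateSubst '' Ioi 0, 1 / √(1 - x ^ 4) := by
    rw [intervalIntegral.integral_of_le zero_le_one, integral_Ioc_eq_integral_Ioo,
      image_lemniscateSubst_Ioi]
  _ = ∫ x in Ioi 0, |2 / ((x ^ 2 + 2) * √(x ^ 2 + 2))| • (1 / √(1 - lemniscateSubst x ^ 4)) :=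
    integral_image_eq_integral_abs_deriv_smul measurableSet_Ioi
      (fun x _ => (hasDerivAt_lemniscateSubst x).hasDerivWithinAt)
      strictMono_lemniscateSubst.injective.injOn _
  _ = agmIntegral 1 √2 := by
    refine setIntegral_congr_fun measurableSet_Ioi fun x _ => ?_
    rw [abs_of_pos (by positivity), smul_eq_mul, deriv_lemniscateSubst_mul]

end

theorem agmIntegral_eq_of_tendsto {a b : ℕ → ℝ} {K M : ℝ} (ha : ∀ n, 0 < a n) (hb : ∀ n, 0 < b n)
    (hK : ∀ n, agmIntegral (a n) (b n) = K) (hM : 0 < M)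
    (hA : Tendsto a atTop (nhds M)) (hB : Tendsto b atTop (nhds M)) :
    K = π / (2 * M) := by
  have hπM : ∀ {c : ℕ → ℝ}, Tendsto c atTop (nhds M) →
      Tendsto (fun n => π / (2 * c n)) atTop (nhds (π / (2 * M))) :=
    fun hc => tendsto_const_nhds.div (hc.const_mul 2) (by positivity)
  refine le_antisymm (ge_of_tendsto' (hπM (min_self M ▸ hA.min hB)) fun n => ?_)
    (le_of_tendsto' (hπM (max_self M ▸ hA.max hB)) fun n => ?_)
  · exact hK n ▸ agmIntegral_le (ha n) (hb n)
  · exact hK n ▸ le_agmIntegral (ha n) (hb n)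

lemma one_le_agm (n : ℕ) : 1 ≤ (agm n).1 ∧ 1 ≤ (agm n).2 := by
  induction n with
  | zero => exact ⟨le_rfl, one_le_sqrt.2 one_le_two⟩
  | succ n ih =>
    obtain ⟨ha, hb⟩ := ih
    exact ⟨by simp only [agm]; linarith, one_le_sqrt.2 (one_le_mul_of_one_le_of_one_le ha hb)⟩

lemma agmIntegral_agm (n : ℕ) : agmIntegral (agm n).1 (agm n).2 = agmIntegral 1 √2 := by
  induction n with
  | zero => rfl
  | succ n ih =>
    obtain ⟨ha, hb⟩ := one_le_agm n
    exact (agmIntegral_mean_sqrt (by linarith) (by linarith)).trans ih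

/-- Gauss' formula: if `M = M(1,√2)` is the common limit of Lagrange's AGM iteration
started from `1` and `√2`, then `1/M = (2/π) ∫₀¹ dx / √(1 - x⁴)`. -/
theorem gauss_lemniscate (M : ℝ)
    (hA : Tendsto (fun n => (agm n).1) atTop (nhds M))
    (hB : Tendsto (fun n => (agm n).2) atTop (nhds M)) :
    1 / M = (2 / Real.pi) * ∫ x in (0:ℝ)..1, 1 / Real.sqrt (1 - x ^ 4) := by
  have hpos (n : ℕ) : 0 < (agm n).1 ∧ 0 < (agm n).2 :=
    ⟨one_pos.trans_le (one_le_agm n).1, one_pos.trans_le (one_le_agm n).2⟩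
  have hM : 0 < M := one_pos.trans_le (ge_of_tendsto' hA fun n => (one_le_agm n).1)
  rw [integral_lemniscate, agmIntegral_eq_of_tendsto (fun n => (hpos n).1) (fun n => (hpos n).2)
    agmIntegral_agm hM hA hB]
  field_simp
end

section
/- Let D ≤ −3 be a fundamental discriminant. For every real s > 1, (Σ_{n ∈ S_D} n^{−s})² = ζ(s) · L(s, χ_D) · ∏_{p : (D/p) = −1} (1 − p^{−2s})^{−1} · ∏_{p | D} (1 − p^{−s}), where ζ is the Riemann zeta function, L(s,χ_D) = Σ_{n≥1} χ_D(n)·n^{−s}, and the products run over primes. -/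
open Filter Real
open scoped Classical

/-- The Kronecker symbol `(D/p)` at a prime `p`: it is `0` if `p ∣ D`, equals the
Jacobi symbol `(D|p)` for odd `p ∤ D`, and for `p = 2 ∤ D` equals `1` if
`D ≡ 1 (mod 8)` and `-1` if `D ≡ 5 (mod 8)`. -/
def kron (D : ℤ) (p : ℕ) : ℤ :=
  if (p : ℤ) ∣ D then 0
  else if p = 2 then (if D % 8 = 1 then 1 else -1)
  else jacobiSym D p

/-- `D` is a fundamental discriminant: either `D ≡ 1 (mod 4)` and `D` is squarefree,
or `D = 4m` with `m` squarefree and `m ≡ 2` or `3 (mod 4)`. -/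
def IsFundamentalDiscriminant (D : ℤ) : Prop :=
  (D % 4 = 1 ∧ Squarefree D) ∨
  (∃ m : ℤ, D = 4 * m ∧ Squarefree m ∧ (m % 4 = 2 ∨ m % 4 = 3))

/-- `S_D`: the multiplicative semigroup generated by the primes `p` with
`(D/p) = 1` together with the squares of the primes `q` with `(D/q) = -1`;
equivalently, the positive integers `n` such that every prime `p ∣ n` has
`(D/p) = 1`, or `(D/p) = -1` and `p` occurs in `n` to an even exponent. -/
def SD (D : ℤ) : Set ℕ :=
  {n : ℕ | 0 < n ∧ ∀ p : ℕ, p.Prime → p ∣ n →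
    (kron D p = 1 ∨ (kron D p = -1 ∧ Even (n.factorization p)))}

/-- `χ` is the completely multiplicative function `χ_D` with `χ_D(p) = (D/p)` on
primes. -/
def IsChiD (D : ℤ) (χ : ℕ → ℤ) : Prop :=
  χ 0 = 0 ∧ χ 1 = 1 ∧ (∀ m n : ℕ, χ (m * n) = χ m * χ n) ∧
    ∀ p : ℕ, p.Prime → χ p = kron D p

/-- `L(s,χ) = ∑_{n ≥ 1} χ(n) n^{-s}` (for real `s > 1`). -/
noncomputable def LChi (χ : ℕ → ℤ) (s : ℝ) : ℝ :=
  ∑' n : ℕ, (χ n : ℝ) * (n : ℝ) ^ (-s)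

/-- `L'(s,χ) = -∑_{n ≥ 1} χ(n) (log n) n^{-s}` (for real `s > 1`). -/
noncomputable def LChi' (χ : ℕ → ℤ) (s : ℝ) : ℝ :=
  -∑' n : ℕ, (χ n : ℝ) * Real.log n * (n : ℝ) ^ (-s)

/-- The Riemann zeta function `ζ(s) = ∑_{n ≥ 1} n^{-s}` (for real `s > 1`). -/
noncomputable def zetaR (s : ℝ) : ℝ := ∑' n : ℕ, (n : ℝ) ^ (-s)

/-- `ζ'(s) = -∑_{n ≥ 1} (log n) n^{-s}` (for real `s > 1`). -/
noncomputable def zetaR' (s : ℝ) : ℝ := -∑' n : ℕ, Real.log n * (n : ℝ) ^ (-s)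

/-!
Both sides are Euler products, so it suffices to compare local factors. With `a = p^{-s}`,
the local factor of `S_D` is `(1 - a)⁻¹` at a split prime, `(1 - a²)⁻¹` at an inert prime and
`1` at a ramified prime; in each case its square is `(1 - a)⁻¹ (1 - χ_D(p) a)⁻¹` times the inert
correction `(1 - a²)⁻¹` and the ramified correction `1 - a`. The product of the inert corrections
converges because it is itself the Euler product of the series over the semigroup generated by
the squares of the inert primes.
-/

lemma Nat.Prime.cast_rpow_neg_lt_one {p : ℕ} (hp : p.Prime) {s : ℝ} (hs : 0 < s) :
    (p : ℝ) ^ (-s) < 1 :=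
  Real.rpow_lt_one_of_one_lt_of_neg (by exact_mod_cast hp.one_lt) (neg_neg_of_pos hs)

lemma rpow_neg_two_mul {x : ℝ} (hx : 0 ≤ x) (s : ℝ) : x ^ (-(2 * s)) = (x ^ (-s)) ^ 2 := by
  rw [← Real.rpow_natCast, ← Real.rpow_mul hx]; ring_nf

lemma tsum_ite_even_pow {K : Type*} [NormedField K] [CompleteSpace K] {a : K} (ha : ‖a‖ < 1) :
    ∑' e : ℕ, (if Even e then a ^ e else 0) = (1 - a ^ 2)⁻¹ := by
  have hsupp : Function.support (fun e : ℕ => if Even e then a ^ e else 0) ⊆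
      Set.range (2 * ·) := fun e he => by
    obtain ⟨k, rfl⟩ := (Function.mem_support.mp he).imp_symm (if_neg ·)
    exact ⟨k, by ring⟩
  rw [← (mul_right_injective₀ two_ne_zero).tsum_eq hsupp]
  simp only [even_two_mul, if_true, pow_mul]
  exact tsum_geometric_of_norm_lt_one (by simpa using pow_lt_one₀ (norm_nonneg a) ha two_ne_zero)

lemma kron_eq_zero_or_one_or_neg_one (D : ℤ) (p : ℕ) :
    kron D p = 0 ∨ kron D p = 1 ∨ kron D p = -1 := by
  unfold kron
  split_ifs
  exacts [Or.inl rfl, Or.inr (Or.inl rfl), Or.inr (Or.inr rfl), jacobiSym.trichotomy D p]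

lemma kron_eq_zero_iff {D : ℤ} {p : ℕ} (hp : p.Prime) : kron D p = 0 ↔ p ∣ D.natAbs := by
  have : NeZero p := ⟨hp.ne_zero⟩
  rw [← Int.natCast_dvd]
  unfold kron
  split_ifs with hdvd
  · simpa using hdvd
  · simp [hdvd]
  · simp [hdvd]
  · rw [jacobiSym.eq_zero_iff_not_coprime, Int.gcd, Int.natAbs_natCast, Nat.gcd_comm, ne_eq,
      ← Nat.coprime_iff_gcd_eq_one, hp.coprime_iff_not_dvd, not_not, Int.natCast_dvd]

section FactorizationSet

variable (P : ℕ → ℕ → Prop)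

def factorizationSet : Set ℕ :=
  {n | 0 < n ∧ ∀ p, p.Prime → p ∣ n → P p (n.factorization p)}

lemma one_mem_factorizationSet : 1 ∈ factorizationSet P :=
  ⟨one_pos, fun _ hp h => absurd (Nat.dvd_one.mp h) hp.ne_one⟩

lemma mul_mem_factorizationSet_iff {m n : ℕ} (h : m.Coprime n) :
    m * n ∈ factorizationSet P ↔ m ∈ factorizationSet P ∧ n ∈ factorizationSet P := by
  rcases eq_or_ne m 0 with rfl | hm
  · simp [factorizationSet]
  rcases eq_or_ne n 0 with rfl | hn
  · simp [factorizationSet]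
  have hm' {p : ℕ} (hp : p.Prime) (hpm : p ∣ m) : (m * n).factorization p = m.factorization p :=
    Nat.factorization_eq_of_coprime_left h ((Nat.mem_primeFactorsList hm).mpr ⟨hp, hpm⟩)
  have hn' {p : ℕ} (hp : p.Prime) (hpn : p ∣ n) : (m * n).factorization p = n.factorization p :=
    Nat.factorization_eq_of_coprime_right h ((Nat.mem_primeFactorsList hn).mpr ⟨hp, hpn⟩)
  simp only [factorizationSet, Set.mem_ofPred_eq, Nat.pos_of_ne_zero hm, Nat.pos_of_ne_zero hn,
    Nat.pos_of_ne_zero (mul_ne_zero hm hn), true_and]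
  constructor
  · intro H
    exact ⟨fun p hp hpm => hm' hp hpm ▸ H p hp (hpm.mul_right n),
      fun p hp hpn => hn' hp hpn ▸ H p hp (hpn.mul_left m)⟩
  · rintro ⟨Hm, Hn⟩ p hp hpmn
    rcases hp.dvd_mul.mp hpmn with hpm | hpn
    · exact hm' hp hpm ▸ Hm p hp hpm
    · exact hn' hp hpn ▸ Hn p hp hpn

lemma pow_mem_factorizationSet_iff {p : ℕ} (hp : p.Prime) (e : ℕ) :
    p ^ e ∈ factorizationSet P ↔ e = 0 ∨ P p e := by
  rcases eq_or_ne e 0 with rfl | he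
  · simp [one_mem_factorizationSet]
  have hfac : (p ^ e).factorization p = e := by simp [hp.factorization_pow]
  simp only [factorizationSet, Set.mem_ofPred_eq, he, false_or, pow_pos hp.pos, true_and]
  constructor
  · intro H
    exact hfac ▸ H p hp (dvd_pow_self p he)
  · intro H q hq hqp
    obtain rfl := (Nat.prime_dvd_prime_iff_eq hq hp).mp (hq.dvd_of_dvd_pow hqp)
    rwa [hfac]

noncomputable def localFactor (s : ℝ) (p : ℕ) : ℝ :=
  ∑' e : ℕ, if e = 0 ∨ P p e then ((p : ℝ) ^ (-s)) ^ e else 0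

lemma hasProd_localFactor {s : ℝ} (hs : 1 < s) :
    HasProd (fun p : Nat.Primes => localFactor P s p)
      (∑' n : ℕ, if n ∈ factorizationSet P then (n : ℝ) ^ (-s) else 0) := by
  let f : ℕ → ℝ := fun n => if n ∈ factorizationSet P then (n : ℝ) ^ (-s) else 0
  have hlocal (p : Nat.Primes) : ∑' e, f (p ^ e) = localFactor P s p := by
    simp only [f, localFactor, pow_mem_factorizationSet_iff P p.prop, Nat.cast_pow,
      ← Real.rpow_pow_comm (Nat.cast_nonneg _)]
  have hmul {m n : ℕ} (h : m.Coprime n) : f (m * n) = f m * f n := by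
    simp only [f, mul_mem_factorizationSet_iff P h]
    split_ifs <;> simp_all [Real.mul_rpow]
  have hsum : Summable (‖f ·‖) := by
    refine (Real.summable_nat_rpow.mpr (by linarith : -s < -1)).of_nonneg_of_le
      (fun _ => norm_nonneg _) fun n => ?_
    simp only [f]
    split_ifs <;> simp [abs_of_nonneg, Real.rpow_nonneg]
  simpa only [hlocal] using EulerProduct.eulerProduct_hasProd (f := f)
    (by simp [f, one_mem_factorizationSet]) hmul hsum (by simp [f, factorizationSet])

variable {P} {p : ℕ} {s : ℝ}

lemma localFactor_of_forall (hp : p.Prime) (hs : 0 < s) (hP : ∀ e, P p e) :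
    localFactor P s p = (1 - (p : ℝ) ^ (-s))⁻¹ := by
  simp only [localFactor, hP, or_true, if_true]
  exact tsum_geometric_of_lt_one (by positivity) (hp.cast_rpow_neg_lt_one hs)

lemma localFactor_of_forall_iff_even (hp : p.Prime) (hs : 0 < s) (hP : ∀ e, P p e ↔ Even e) :
    localFactor P s p = (1 - ((p : ℝ) ^ (-s)) ^ 2)⁻¹ := by
  have hcond (e : ℕ) : e = 0 ∨ P p e ↔ Even e := by
    rw [hP, or_iff_right_of_imp]; rintro rfl; exact Even.zero
  simp only [localFactor, hcond]
  exact tsum_ite_even_pow (by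
    rw [Real.norm_of_nonneg (by positivity)]; exact hp.cast_rpow_neg_lt_one hs)

lemma localFactor_of_forall_not (hP : ∀ e, ¬ P p e) : localFactor P s p = 1 := by
  simp [localFactor, hP]

end FactorizationSet

lemma norm_le_one_of_forall_prime (χ : ℕ →*₀ ℝ) (h : ∀ p, p.Prime → ‖χ p‖ ≤ 1) (n : ℕ) :
    ‖χ n‖ ≤ 1 := by
  induction n using Nat.recOnMul with
  | zero => simp
  | one => simp
  | prime p hp => exact h p hp
  | mul m n hm hn => rw [map_mul, norm_mul]; exact mul_le_one₀ hm (norm_nonneg _) hn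

lemma hasProd_tsum_mul_rpow_neg (χ : ℕ →*₀ ℝ) (hχ : ∀ p, p.Prime → ‖χ p‖ ≤ 1) {s : ℝ}
    (hs : 1 < s) :
    HasProd (fun p : Nat.Primes => (1 - χ p * (p : ℝ) ^ (-s))⁻¹)
      (∑' n : ℕ, χ n * (n : ℝ) ^ (-s)) := by
  let f : ℕ →*₀ ℝ :=
    { toFun n := χ n * (n : ℝ) ^ (-s)
      map_zero' := by simp
      map_one' := by simp
      map_mul' m n := by
        simp only [map_mul, Nat.cast_mul, Real.mul_rpow (Nat.cast_nonneg m) (Nat.cast_nonneg n)]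
        ring }
  refine EulerProduct.eulerProduct_completely_multiplicative_hasProd (f := f)
    ((Real.summable_nat_rpow.mpr (by linarith : -s < -1)).of_nonneg_of_le
      (fun _ => norm_nonneg _) fun n => ?_)
  calc ‖f n‖ = ‖χ n‖ * (n : ℝ) ^ (-s) := by
        simp [f, Real.norm_of_nonneg (Real.rpow_nonneg (Nat.cast_nonneg n) _)]
    _ ≤ 1 * (n : ℝ) ^ (-s) := by gcongr; exact norm_le_one_of_forall_prime χ hχ n
    _ = (n : ℝ) ^ (-s) := one_mul _

lemma hasProd_zetaR {s : ℝ} (hs : 1 < s) :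
    HasProd (fun p : Nat.Primes => (1 - (p : ℝ) ^ (-s))⁻¹) (zetaR s) := by
  have hone (n : ℕ) : (1 : ℕ →*₀ ℝ) n * (n : ℝ) ^ (-s) = (n : ℝ) ^ (-s) := by
    rcases eq_or_ne n 0 with rfl | hn
    · simp [Real.zero_rpow (by linarith : -s ≠ 0)]
    · simp [MonoidWithZeroHom.one_apply_def, hn]
  have h := hasProd_tsum_mul_rpow_neg 1 (fun p _ => by
    rw [MonoidWithZeroHom.one_apply_def]; split_ifs <;> simp) hs
  simp only [hone] at h
  exact h

lemma IsChiD.hasProd_LChi {D : ℤ} {χ : ℕ → ℤ} (hχ : IsChiD D χ) {s : ℝ} (hs : 1 < s) :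
    HasProd (fun p : Nat.Primes => (1 - kron D p * (p : ℝ) ^ (-s))⁻¹) (LChi χ s) := by
  obtain ⟨h0, h1, hmul, hprime⟩ := hχ
  let χℝ : ℕ →*₀ ℝ :=
    { toFun n := χ n
      map_zero' := by simp [h0]
      map_one' := by simp [h1]
      map_mul' m n := by simp [hmul] }
  have hχℝ (p : Nat.Primes) : χℝ p = kron D p := by simp [χℝ, hprime p p.prop]
  have h := hasProd_tsum_mul_rpow_neg χℝ (fun p hp => by
    rcases kron_eq_zero_or_one_or_neg_one D p with h | h | h <;> simp [χℝ, hprime p hp, h]) hs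
  simp only [hχℝ] at h
  exact h

section PrimeProducts

variable {α : Type*} [CommMonoid α] [TopologicalSpace α]

lemma tprod_subtype_prime_and (Q : ℕ → Prop) [DecidablePred Q] (g : ℕ → α) :
    ∏' p : {p : ℕ // p.Prime ∧ Q p}, g p = ∏' p : Nat.Primes, if Q p then g p else 1 := by
  let ι : {p : ℕ // p.Prime ∧ Q p} → Nat.Primes := fun p => ⟨p, p.2.1⟩
  have hι : ι.Injective := fun p q h => Subtype.ext (congrArg Subtype.val h :)
  rw [← hι.tprod_eq fun p hp => ⟨⟨p, p.2, by_contra fun h => hp (if_neg h)⟩, rfl⟩]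
  exact tprod_congr fun p => (if_pos p.2.2).symm

lemma hasProd_ite_dvd {n : ℕ} (hn : n ≠ 0) (g : ℕ → α) :
    HasProd (fun p : Nat.Primes => if (p : ℕ) ∣ n then g p else 1) (∏ p ∈ n.primeFactors, g p) := by
  have hfin : Function.HasFiniteMulSupport fun p : Nat.Primes => if (p : ℕ) ∣ n then g p else 1 :=
    (n.primeFactors.finite_toSet.preimage Subtype.val_injective.injOn).subset fun p hp =>
      Nat.mem_primeFactors.mpr ⟨p.prop, by_contra fun h => hp (if_neg h), hn⟩
  have hprod : ∏ p ∈ n.primeFactors, g p = ∏' p : {p : ℕ // p.Prime ∧ p ∣ n}, g p :=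
    (Finset.tprod_subtype _ g).symm.trans <|
      (Equiv.subtypeEquivRight fun p => Nat.mem_primeFactors_of_ne_zero hn).tprod_eq
        fun p : {p : ℕ // p.Prime ∧ p ∣ n} => g p
  rw [hprod, tprod_subtype_prime_and (· ∣ n) g]
  exact (multipliable_of_hasFiniteMulSupport hfin).hasProd

end PrimeProducts

def sdExponent (D : ℤ) (p e : ℕ) : Prop := kron D p = 1 ∨ (kron D p = -1 ∧ Even e)

def inertSquareExponent (D : ℤ) (p e : ℕ) : Prop := kron D p = -1 ∧ Even e

lemma SD_eq_factorizationSet (D : ℤ) : SD D = factorizationSet (sdExponent D) := rfl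

section LocalFactors

variable {D : ℤ} {p : ℕ} {s : ℝ}

lemma localFactor_inertSquareExponent (hp : p.Prime) (hs : 0 < s) :
    localFactor (inertSquareExponent D) s p =
      if kron D p = -1 then (1 - (p : ℝ) ^ (-(2 * s)))⁻¹ else 1 := by
  split_ifs with h
  · rw [localFactor_of_forall_iff_even hp hs fun e => and_iff_right h,
      rpow_neg_two_mul (Nat.cast_nonneg p) s]
  · exact localFactor_of_forall_not fun e he => h he.1

lemma localFactor_sdExponent_sq (hp : p.Prime) (hs : 0 < s) :
    localFactor (sdExponent D) s p ^ 2 =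
      (1 - (p : ℝ) ^ (-s))⁻¹ * (1 - kron D p * (p : ℝ) ^ (-s))⁻¹ *
        (if kron D p = -1 then (1 - (p : ℝ) ^ (-(2 * s)))⁻¹ else 1) *
        (if p ∣ D.natAbs then 1 - (p : ℝ) ^ (-s) else 1) := by
  have ha : 1 - (p : ℝ) ^ (-s) ≠ 0 := (sub_pos.mpr (hp.cast_rpow_neg_lt_one hs)).ne'
  simp only [rpow_neg_two_mul (Nat.cast_nonneg p) s, ← kron_eq_zero_iff hp]
  rcases kron_eq_zero_or_one_or_neg_one D p with h | h | h
  · rw [localFactor_of_forall_not fun e he => by simp [sdExponent, h] at he]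
    simp [h, ha]
  · rw [localFactor_of_forall hp hs fun e => Or.inl h]
    simp [h, sq]
  · rw [localFactor_of_forall_iff_even hp hs fun e => by simp [sdExponent, h]]
    have hfactor : 1 - ((p : ℝ) ^ (-s)) ^ 2 = (1 - (p : ℝ) ^ (-s)) * (1 + (p : ℝ) ^ (-s)) := by
      ring
    simp [h, hfactor]
    ring

end LocalFactors

theorem LSeries_SD_sq_general (D : ℤ) (hD : D ≤ -3)
    (χD : ℕ → ℤ) (hχ : IsChiD D χD) (s : ℝ) (hs : 1 < s) :
    (∑' n : ℕ, if n ∈ SD D then (n : ℝ) ^ (-s) else 0) ^ 2 =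
      zetaR s * LChi χD s *
        (∏' p : {p : ℕ // p.Prime ∧ kron D p = -1}, (1 - (p : ℝ) ^ (-(2 * s)))⁻¹) *
        ∏ p ∈ D.natAbs.primeFactors, (1 - (p : ℝ) ^ (-s)) := by
  have hs₀ : 0 < s := by linarith
  have hSD := hasProd_localFactor (sdExponent D) hs
  have hInert := hasProd_localFactor (inertSquareExponent D) hs
  simp only [fun p : Nat.Primes => localFactor_inertSquareExponent (D := D) p.prop hs₀] at hInert
  have hRamified := hasProd_ite_dvd (n := D.natAbs) (Int.natAbs_ne_zero.mpr (by omega))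
    fun p => 1 - (p : ℝ) ^ (-s)
  rw [SD_eq_factorizationSet, sq,
    tprod_subtype_prime_and (fun p => kron D p = -1) fun p => (1 - (p : ℝ) ^ (-(2 * s)))⁻¹]
  refine (hSD.mul hSD).unique ?_
  convert (((hasProd_zetaR hs).mul (hχ.hasProd_LChi hs)).mul
    hInert.multipliable.hasProd).mul hRamified using 1
  funext p
  rw [← sq, localFactor_sdExponent_sq p.prop hs₀]

/-- For a fundamental discriminant `D ≤ -3` and real `s > 1`:
`L_{S_D}(s)² = ζ(s) L(s,χ_D) ∏_{(D/p) = -1} (1 - p^{-2s})^{-1} ∏_{p ∣ D} (1 - p^{-s})`. -/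
theorem LSeries_SD_sq (D : ℤ) (hD : D ≤ -3) (hfund : IsFundamentalDiscriminant D)
    (χD : ℕ → ℤ) (hχ : IsChiD D χD) (s : ℝ) (hs : 1 < s) :
    (∑' n : ℕ, if n ∈ SD D then (n : ℝ) ^ (-s) else 0) ^ 2 =
      zetaR s * LChi χD s *
        (∏' p : {p : ℕ // p.Prime ∧ kron D p = -1}, (1 - (p : ℝ) ^ (-(2 * s)))⁻¹) *
        ∏ p ∈ D.natAbs.primeFactors, (1 - (p : ℝ) ^ (-s)) :=
  LSeries_SD_sq_general D hD χD hχ s hs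
end
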